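/- Let f be a non-constant meromorphic function on ℂ and P[f] a differential polynomial generated by f, of degree d̄(P), lower degree d_(P), weight Γ_P and order k, and set μ = max_j (Γ_{M_j} − d(M_j)). Then N(r, ∞; P[f]/f^{d̄(P)}) ≤ (Γ_P − d̄(P))·N̄(r,∞;f) + (d̄(P) − d_(P))·N(r,0;f|≥k+1) + μ·N̄(r,0;f|≥k+1) + d̄(P)·N(r,0;f|≤k) + S(r,f). -/

import Mathlib

/-!
At every point the pole order of `P[f]/f^d̄` is bounded by reading off Laurent orders. If `f` has
a pole of order `p`, then `f^(i)` has a pole of order `p + i`, so `M_j[f]` has a pole of order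
`d(M_j) p + Γ_{M_j} - d(M_j) ≤ d̄ p + Γ_P - d̄`, and dividing by `f^d̄` leaves at most `Γ_P - d̄`.
At a zero of order `q ≤ k` the monomials are holomorphic and only `f^d̄` contributes `d̄ q`. At a
zero of order `q > k`, `f^(i)` vanishes to order `q - i`, so `M_j[f]` vanishes to order at least
`d_ q - μ` and the quotient has a pole of order at most `(d̄ - d_) q + μ`. Poles of the
coefficients `b_j` add at most their own orders. The integrated counting function is monotone and
additive in the multiplicity, so the pointwise bound integrates to the inequality, with error term
`Σ_j N(r,∞;b_j) ≤ Σ_j T(r,b_j) = S(r,f)`.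
-/

open Filter MeasureTheory Classical

open scoped Classical

noncomputable section

namespace Nevanlinna

/-- The multiplicity of `z` as a zero of the meromorphic function `g`
(zero if `g` is not meromorphic at `z`, or has a pole or nonzero value there,
or vanishes identically near `z`). -/
def zeroMult (g : ℂ → ℂ) (z : ℂ) : ℕ :=
  if h : MeromorphicAt g z then ((meromorphicOrderAt g z).untopD 0).toNat else 0

/-- The multiplicity of `z` as a pole of the meromorphic function `g`. -/
def poleMult (g : ℂ → ℂ) (z : ℂ) : ℕ :=
  if h : MeromorphicAt g z then (-((meromorphicOrderAt g z).untopD 0)).toNat else 0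

/-- Unintegrated counting function: the number of points of the closed disc of
radius `r` about the origin, counted according to the multiplicity function `ν`. -/
def nCount (ν : ℂ → ℕ) (r : ℝ) : ℝ :=
  ∑ᶠ z ∈ Metric.closedBall (0 : ℂ) r, (ν z : ℝ)

/-- Integrated (Nevanlinna) counting function associated to a multiplicity function `ν`:
`N(r) = ν(0)·log r + ∫₀ʳ (n(t) - ν(0))/t dt`. -/
def NCount (ν : ℂ → ℕ) (r : ℝ) : ℝ :=
  (ν 0 : ℝ) * Real.log r + ∫ t in (0 : ℝ)..r, (nCount ν t - (ν 0 : ℝ)) / t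

/-- `N(r,0;g)` : integrated counting function of the zeros of `g`, with multiplicity. -/
def Nzero (g : ℂ → ℂ) : ℝ → ℝ := NCount (zeroMult g)

/-- `N̄(r,0;g)` : reduced integrated counting function of the zeros of `g`. -/
def NzeroRed (g : ℂ → ℂ) : ℝ → ℝ := NCount (fun z => min 1 (zeroMult g z))

/-- `N̄(r,0;g|≥p)` : reduced counting function of the zeros of `g` of multiplicity `≥ p`. -/
def NzeroRedGe (g : ℂ → ℂ) (p : ℕ) : ℝ → ℝ :=
  NCount (fun z => if p ≤ zeroMult g z then 1 else 0)

/-- `N(r,0;g|≥p)` : counting function (with multiplicity) of the zeros of `g`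
of multiplicity `≥ p`. -/
def NzeroGe (g : ℂ → ℂ) (p : ℕ) : ℝ → ℝ :=
  NCount (fun z => if p ≤ zeroMult g z then zeroMult g z else 0)

/-- `N(r,0;g|≤p)` : counting function (with multiplicity) of the zeros of `g`
of multiplicity `≤ p`. -/
def NzeroLe (g : ℂ → ℂ) (p : ℕ) : ℝ → ℝ :=
  NCount (fun z => if zeroMult g z ≤ p then zeroMult g z else 0)

/-- `N_p(r,0;g) = N̄(r,0;g) + N̄(r,0;g|≥2) + ⋯ + N̄(r,0;g|≥p)`. -/
def NzeroTrunc (g : ℂ → ℂ) (p : ℕ) (r : ℝ) : ℝ :=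
  ∑ q ∈ Finset.Icc 1 p, NzeroRedGe g q r

/-- `N(r,∞;g)` : integrated counting function of the poles of `g`, with multiplicity. -/
def Npole (g : ℂ → ℂ) : ℝ → ℝ := NCount (poleMult g)

/-- `N̄(r,∞;g)` : reduced integrated counting function of the poles of `g`. -/
def NpoleRed (g : ℂ → ℂ) : ℝ → ℝ := NCount (fun z => min 1 (poleMult g z))

/-- The positive part of the logarithm, `log⁺ x = max (log x) 0`. -/
def plog (x : ℝ) : ℝ := max (Real.log x) 0

/-- The Nevanlinna proximity function `m(r,g)`. -/
def prox (g : ℂ → ℂ) (r : ℝ) : ℝ :=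
  (2 * Real.pi)⁻¹ * ∫ θ in (0 : ℝ)..(2 * Real.pi), plog ‖g (r * Complex.exp (θ * Complex.I))‖

/-- The Nevanlinna characteristic function `T(r,g) = m(r,g) + N(r,∞;g)`. -/
def charT (g : ℂ → ℂ) (r : ℝ) : ℝ := prox g r + Npole g r

/-- `s = S(r,f)` : `s(r)/T(r,f) → 0` as `r → ∞` outside a set `E` of finite
Lebesgue measure. -/
def IsSmall (s : ℝ → ℝ) (f : ℂ → ℂ) : Prop :=
  ∃ E : Set ℝ, volume E < ⊤ ∧
    Tendsto (fun r => s r / charT f r) (atTop ⊓ Filter.principal Eᶜ) (nhds 0)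

/-- `a` is a small function of `f` : `T(r,a) = S(r,f)`. -/
def IsSmallFunction (a f : ℂ → ℂ) : Prop := IsSmall (charT a) f

/-- The deficiency `δ_p(0,g) = 1 - limsup_{r→∞} N_p(r,0;g)/T(r,g)`. -/
def deltaP (p : ℕ) (g : ℂ → ℂ) : ℝ :=
  1 - Filter.limsup (fun r => NzeroTrunc g p r / charT g r) Filter.atTop

/-- The deficiency `δ(a,f) = 1 - limsup_{r→∞} N(r,a;f)/T(r,f)` of a (small) function `a`. -/
def deltaFn (a f : ℂ → ℂ) : ℝ :=
  1 - Filter.limsup (fun r => Nzero (fun z => f z - a z) r / charT f r) Filter.atTop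

/-- `Θ(0,g) = 1 - limsup_{r→∞} N̄(r,0;g)/T(r,g)`. -/
def theta0 (g : ℂ → ℂ) : ℝ :=
  1 - Filter.limsup (fun r => NzeroRed g r / charT g r) Filter.atTop

/-- `Θ(∞,g) = 1 - limsup_{r→∞} N̄(r,∞;g)/T(r,g)`. -/
def thetaInf (g : ℂ → ℂ) : ℝ :=
  1 - Filter.limsup (fun r => NpoleRed g r / charT g r) Filter.atTop

/-- The differential monomial `M[f] = f^{n₀}·(f')^{n₁}⋯(f^{(k)})^{n_k}`. -/
def diffMono {k : ℕ} (n : Fin (k + 1) → ℕ) (f : ℂ → ℂ) (z : ℂ) : ℂ :=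
  ∏ i : Fin (k + 1), (iteratedDeriv i f z) ^ (n i)

/-- The degree `d(M) = Σ_{i=0}^k n_i` of a differential monomial. -/
def monoDeg {k : ℕ} (n : Fin (k + 1) → ℕ) : ℕ := ∑ i : Fin (k + 1), n i

/-- The weight `Γ_M = Σ_{i=0}^k (i+1)·n_i` of a differential monomial. -/
def monoWt {k : ℕ} (n : Fin (k + 1) → ℕ) : ℕ := ∑ i : Fin (k + 1), (i.1 + 1) * n i

/-- The differential polynomial `P[f] = Σ_{j=1}^t b_j·M_j[f]`. -/
def diffPoly {t k : ℕ} (b : Fin t → ℂ → ℂ) (M : Fin t → Fin (k + 1) → ℕ)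
    (f : ℂ → ℂ) (z : ℂ) : ℂ :=
  ∑ j : Fin t, b j z * diffMono (M j) f z

/-- The functions `g` and `h` share the value `0` with weight `l`, i.e.
`E_l(0;g) = E_l(0;h)` : at every point the multiplicities as zeros of `g` and of `h`,
both truncated at level `l+1`, coincide. -/
def ShareZero (l : ℕ) (g h : ℂ → ℂ) : Prop :=
  ∀ z : ℂ, min (l + 1) (zeroMult g z) = min (l + 1) (zeroMult h z)

/-- `f` is a non-constant meromorphic function on the complex plane. -/
def NonconstMero (f : ℂ → ℂ) : Prop :=
  MeromorphicOn f Set.univ ∧ ¬ ∃ c : ℂ, ∀ z, f z = c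

end Nevanlinna

open Nevanlinna

open Topology

theorem WithTop.coe_sub_le_sub_coe {a : WithTop ℤ} {m : ℤ} (h : (m : WithTop ℤ) ≤ a)
    (c : ℤ) : ((m - c : ℤ) : WithTop ℤ) ≤ a - c := by
  rw [sub_eq_add_neg, sub_eq_add_neg, WithTop.coe_add]
  exact add_le_add_left h _

section MeromorphicOrder

variable {𝕜 : Type*} [NontriviallyNormedField 𝕜] {x : 𝕜}

theorem le_meromorphicOrderAt_pow {g : 𝕜 → 𝕜} {m : ℤ} (hg : MeromorphicAt g x)
    (h : (m : WithTop ℤ) ≤ meromorphicOrderAt g x) (n : ℕ) :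
    ((n * m : ℤ) : WithTop ℤ) ≤ meromorphicOrderAt (g ^ n) x := by
  induction n with
  | zero => simp
  | succ n ih =>
    rw [pow_succ, meromorphicOrderAt_mul (hg.pow n) hg, Nat.cast_succ, add_one_mul,
      WithTop.coe_add]
    exact add_le_add ih h

theorem le_meromorphicOrderAt_prod {ι : Type*} {s : Finset ι} {g : ι → 𝕜 → 𝕜} {m : ι → ℤ}
    (hg : ∀ i ∈ s, MeromorphicAt (g i) x)
    (h : ∀ i ∈ s, (m i : WithTop ℤ) ≤ meromorphicOrderAt (g i) x) :
    ((∑ i ∈ s, m i : ℤ) : WithTop ℤ) ≤ meromorphicOrderAt (fun z => ∏ i ∈ s, g i z) x := by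
  rw [meromorphicOrderAt_fun_prod hg, WithTop.coe_sum]
  exact Finset.sum_le_sum h

theorem le_meromorphicOrderAt_sum {E : Type*} [NormedAddCommGroup E] [NormedSpace 𝕜 E]
    {ι : Type*} {s : Finset ι} {g : ι → 𝕜 → E} {m : WithTop ℤ}
    (hg : ∀ i ∈ s, MeromorphicAt (g i) x) (h : ∀ i ∈ s, m ≤ meromorphicOrderAt (g i) x) :
    m ≤ meromorphicOrderAt (fun z => ∑ i ∈ s, g i z) x := by
  induction s using Finset.induction_on with
  | empty => simp [meromorphicOrderAt_eq_top_iff.2]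
  | insert a s ha ih =>
    simp only [Finset.sum_insert ha]
    simp only [Finset.mem_insert, forall_eq_or_imp] at hg h
    exact (le_min h.1 (ih hg.2 h.2)).trans
      (meromorphicOrderAt_add hg.1 (MeromorphicAt.fun_sum hg.2))

variable [CompleteSpace 𝕜] {f : 𝕜 → 𝕜}

theorem MeromorphicAt.iteratedDeriv (hf : MeromorphicAt f x) (i : ℕ) :
    MeromorphicAt (iteratedDeriv i f) x := by
  rw [iteratedDeriv_eq_iterate]
  exact hf.iterated_deriv

theorem meromorphicOrderAt_deriv_nonneg (hf : MeromorphicAt f x)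
    (h : 0 ≤ meromorphicOrderAt f x) : 0 ≤ meromorphicOrderAt (deriv f) x := by
  rw [meromorphicOrderAt_congr hf.eq_nhdsNE_toMeromorphicNFAt.nhdsNE_deriv]
  exact (hf.meromorphicOrderAt_nonneg_iff_analyticAt_toMeromorphicNFAt.1 h).deriv
    |>.meromorphicOrderAt_nonneg

theorem meromorphicOrderAt_iteratedDeriv_nonneg (hf : MeromorphicAt f x)
    (h : 0 ≤ meromorphicOrderAt f x) (i : ℕ) :
    0 ≤ meromorphicOrderAt (iteratedDeriv i f) x := by
  induction i with
  | zero => simpa using h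
  | succ i ih =>
    rw [iteratedDeriv_succ]
    exact meromorphicOrderAt_deriv_nonneg (hf.iteratedDeriv i) ih

variable [CharZero 𝕜]

theorem le_meromorphicOrderAt_deriv {m : ℤ} (hf : MeromorphicAt f x)
    (h : (m : WithTop ℤ) ≤ meromorphicOrderAt f x) :
    ((m - 1 : ℤ) : WithTop ℤ) ≤ meromorphicOrderAt (deriv f) x := by
  cases hfx : meromorphicOrderAt f x with
  | top =>
    have hf0 : f =ᶠ[𝓝[≠] x] 0 := meromorphicOrderAt_eq_top_iff.1 hfx
    rw [meromorphicOrderAt_eq_top_iff.2]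
    · exact le_top
    filter_upwards [hf0.nhdsNE_deriv] with z hz
    simpa using hz
  | coe n =>
    rw [hfx, WithTop.coe_le_coe] at h
    rcases eq_or_ne n 0 with rfl | hn
    · exact (WithTop.coe_le_coe.2 (by omega)).trans
        (meromorphicOrderAt_deriv_nonneg hf (hfx ▸ le_rfl))
    · rw [meromorphicOrderAt_deriv_eq_sub_one (by exact_mod_cast hn) hfx]
      exact WithTop.coe_le_coe.2 (by omega)

theorem le_meromorphicOrderAt_iteratedDeriv {m : ℤ} (hf : MeromorphicAt f x)
    (h : (m : WithTop ℤ) ≤ meromorphicOrderAt f x) (i : ℕ) :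
    ((m - i : ℤ) : WithTop ℤ) ≤ meromorphicOrderAt (iteratedDeriv i f) x := by
  induction i with
  | zero => simpa using h
  | succ i ih =>
    rw [iteratedDeriv_succ, Nat.cast_succ, ← sub_sub]
    exact le_meromorphicOrderAt_deriv (hf.iteratedDeriv i) ih

end MeromorphicOrder

namespace Nevanlinna

variable {g : ℂ → ℂ} {z : ℂ}

theorem zeroMult_eq_of_meromorphicOrderAt_eq {q : ℤ} (hg : MeromorphicAt g z)
    (hq : meromorphicOrderAt g z = q) : zeroMult g z = q.toNat := by
  simp [zeroMult, hg, hq]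

theorem poleMult_eq_of_meromorphicOrderAt_eq {q : ℤ} (hg : MeromorphicAt g z)
    (hq : meromorphicOrderAt g z = q) : poleMult g z = (-q).toNat := by
  simp [poleMult, hg, hq]

theorem neg_poleMult_le_meromorphicOrderAt (g : ℂ → ℂ) (z : ℂ) :
    ((-(poleMult g z : ℤ) : ℤ) : WithTop ℤ) ≤ meromorphicOrderAt g z := by
  by_cases hg : MeromorphicAt g z
  · cases hq : meromorphicOrderAt g z with
    | top => exact le_top
    | coe q =>
      rw [poleMult_eq_of_meromorphicOrderAt_eq hg hq, WithTop.coe_le_coe]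
      omega
  · simp [poleMult, hg]

theorem poleMult_le_of_le_meromorphicOrderAt {m : ℤ}
    (h : (m : WithTop ℤ) ≤ meromorphicOrderAt g z) : poleMult g z ≤ (-m).toNat := by
  by_cases hg : MeromorphicAt g z
  · cases hq : meromorphicOrderAt g z with
    | top => simp [poleMult, hg, hq]
    | coe q =>
      rw [hq, WithTop.coe_le_coe] at h
      rw [poleMult_eq_of_meromorphicOrderAt_eq hg hq]
      omega
  · simp [poleMult, hg]

theorem monoDeg_le_monoWt {k : ℕ} (n : Fin (k + 1) → ℕ) : monoDeg n ≤ monoWt n :=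
  Finset.sum_le_sum fun i _ => Nat.le_mul_of_pos_left _ i.1.succ_pos

theorem sum_mul_sub_eq_monoDeg_mul_sub {k : ℕ} (n : Fin (k + 1) → ℕ) (q : ℤ) :
    ∑ i : Fin (k + 1), (n i : ℤ) * (q - i) =
      monoDeg n * q - ((monoWt n : ℤ) - monoDeg n) := by
  simp only [monoDeg, monoWt]
  push_cast
  rw [Finset.sum_mul, ← Finset.sum_sub_distrib, ← Finset.sum_sub_distrib]
  exact Finset.sum_congr rfl fun i _ => by ring

theorem MeromorphicAt.diffMono {k : ℕ} {f : ℂ → ℂ} (hf : MeromorphicAt f z)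
    (n : Fin (k + 1) → ℕ) : MeromorphicAt (diffMono n f) z :=
  MeromorphicAt.fun_prod fun i _ => (hf.iteratedDeriv i).pow (n i)

theorem le_meromorphicOrderAt_diffMono {k : ℕ} {f : ℂ → ℂ} {m : Fin (k + 1) → ℤ}
    (hf : MeromorphicAt f z) (n : Fin (k + 1) → ℕ)
    (h : ∀ i, (m i : WithTop ℤ) ≤ meromorphicOrderAt (iteratedDeriv i f) z) :
    ((∑ i, n i * m i : ℤ) : WithTop ℤ) ≤ meromorphicOrderAt (diffMono n f) z :=
  le_meromorphicOrderAt_prod (fun i _ => (hf.iteratedDeriv i).pow (n i))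
    fun i _ => le_meromorphicOrderAt_pow (hf.iteratedDeriv i) (h i) (n i)

theorem le_meromorphicOrderAt_diffMono_of_le {k : ℕ} {f : ℂ → ℂ} {q : ℤ}
    (hf : MeromorphicAt f z) (hq : (q : WithTop ℤ) ≤ meromorphicOrderAt f z)
    (n : Fin (k + 1) → ℕ) :
    ((monoDeg n * q - ((monoWt n : ℤ) - monoDeg n) : ℤ) : WithTop ℤ) ≤
      meromorphicOrderAt (diffMono n f) z := by
  rw [← sum_mul_sub_eq_monoDeg_mul_sub]
  exact le_meromorphicOrderAt_diffMono hf n fun i => le_meromorphicOrderAt_iteratedDeriv hf hq i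

theorem meromorphicOrderAt_diffMono_nonneg {k : ℕ} {f : ℂ → ℂ} (hf : MeromorphicAt f z)
    (h : 0 ≤ meromorphicOrderAt f z) (n : Fin (k + 1) → ℕ) :
    0 ≤ meromorphicOrderAt (diffMono n f) z := by
  simpa using le_meromorphicOrderAt_diffMono hf n (m := fun _ => 0) fun i => by
    exact_mod_cast meromorphicOrderAt_iteratedDeriv_nonneg hf h i

theorem poleMult_div_pow_eq_zero {f h : ℂ → ℂ} {d : ℕ} (hf : meromorphicOrderAt f z = ⊤)
    (hd : d ≠ 0) : poleMult (fun w => h w / f w ^ d) z = 0 := by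
  have hquot : meromorphicOrderAt (fun w => h w / f w ^ d) z = ⊤ := by
    rw [meromorphicOrderAt_eq_top_iff]
    filter_upwards [meromorphicOrderAt_eq_top_iff.1 hf] with w hw
    simp [hw, hd]
  simpa using poleMult_le_of_le_meromorphicOrderAt (m := 0) (hquot ▸ le_top)

theorem poleMult_diffPoly_div_pow_le_of_le_meromorphicOrderAt {t k : ℕ} {f : ℂ → ℂ}
    {b : Fin t → ℂ → ℂ} {M : Fin t → Fin (k + 1) → ℕ} {q m : ℤ} (d : ℕ) (hf : MeromorphicAt f z)
    (hb : ∀ j, MeromorphicAt (b j) z) (hq : meromorphicOrderAt f z = q)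
    (hM : ∀ j, (m : WithTop ℤ) ≤ meromorphicOrderAt (diffMono (M j) f) z) :
    poleMult (fun w => diffPoly b M f w / f w ^ d) z ≤
      ((∑ j, poleMult (b j) z : ℕ) + d * q - m).toNat := by
  have hterm : ∀ j, ((m - (∑ j, poleMult (b j) z : ℕ) : ℤ) : WithTop ℤ) ≤
      meromorphicOrderAt (b j * diffMono (M j) f) z := fun j => by
    rw [meromorphicOrderAt_mul (hb j) (hf.diffMono _), sub_eq_neg_add, WithTop.coe_add]
    refine add_le_add ((WithTop.coe_le_coe.2 ?_).trans
      (neg_poleMult_le_meromorphicOrderAt _ _)) (hM j)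
    exact neg_le_neg (Int.ofNat_le.2 (Finset.single_le_sum (f := fun j => poleMult (b j) z)
      (fun j _ => Nat.zero_le _) (Finset.mem_univ j)))
  have hP_mero : MeromorphicAt (diffPoly b M f) z :=
    MeromorphicAt.fun_sum fun j _ => (hb j).mul (hf.diffMono _)
  have hP : ((m - (∑ j, poleMult (b j) z : ℕ) : ℤ) : WithTop ℤ) ≤
      meromorphicOrderAt (diffPoly b M f) z :=
    le_meromorphicOrderAt_sum (fun j _ => (hb j).mul (hf.diffMono _)) fun j _ => hterm j
  refine (poleMult_le_of_le_meromorphicOrderAt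
    (m := m - (∑ j, poleMult (b j) z : ℕ) - d * q) ?_).trans_eq (by ring_nf)
  change _ ≤ meromorphicOrderAt (diffPoly b M f / f ^ d) z
  rw [meromorphicOrderAt_div hP_mero (hf.pow d), meromorphicOrderAt_pow hf, hq]
  exact_mod_cast WithTop.coe_sub_le_sub_coe hP (d * q)

def poleMultRed (g : ℂ → ℂ) (z : ℂ) : ℕ := min 1 (poleMult g z)

def zeroMultGe (g : ℂ → ℂ) (p : ℕ) (z : ℂ) : ℕ := if p ≤ zeroMult g z then zeroMult g z else 0

def zeroMultRedGe (g : ℂ → ℂ) (p : ℕ) (z : ℂ) : ℕ := if p ≤ zeroMult g z then 1 else 0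

def zeroMultLe (g : ℂ → ℂ) (p : ℕ) (z : ℂ) : ℕ := if zeroMult g z ≤ p then zeroMult g z else 0

theorem poleMult_diffPoly_div_pow_le {t k : ℕ} {f : ℂ → ℂ} {b : Fin t → ℂ → ℂ}
    {M : Fin t → Fin (k + 1) → ℕ} {dbar dlow Γ μ : ℕ} (hf : MeromorphicAt f z)
    (hb : ∀ j, MeromorphicAt (b j) z)
    (hdbar : ∀ j, monoDeg (M j) ≤ dbar) (hdlow : ∀ j, dlow ≤ monoDeg (M j))
    (hΓ : ∀ j, monoWt (M j) ≤ Γ) (hμ : ∀ j, monoWt (M j) - monoDeg (M j) ≤ μ)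
    (hdbar_pos : 0 < dbar) :
    poleMult (fun w => diffPoly b M f w / f w ^ dbar) z ≤
      (Γ - dbar) * poleMultRed f z + (dbar - dlow) * zeroMultGe f (k + 1) z
        + μ * zeroMultRedGe f (k + 1) z + dbar * zeroMultLe f k z + ∑ j, poleMult (b j) z := by
  cases hq : meromorphicOrderAt f z with
  | top => simp [poleMult_div_pow_eq_zero hq hdbar_pos.ne']
  | coe q =>
    simp only [poleMultRed, zeroMultGe, zeroMultRedGe, zeroMultLe,
      zeroMult_eq_of_meromorphicOrderAt_eq hf hq, poleMult_eq_of_meromorphicOrderAt_eq hf hq]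
    have hmono := fun j => le_meromorphicOrderAt_diffMono_of_le hf hq.ge (M j)
    rcases lt_or_ge q 0 with hq_neg | hq_nonneg
    · have hm : ∀ j, (dbar * q - (Γ - dbar) : ℤ) ≤
          monoDeg (M j) * q - ((monoWt (M j) : ℤ) - monoDeg (M j)) := fun j => by
        have := hΓ j
        nlinarith [mul_nonpos_of_nonneg_of_nonpos (sub_nonneg.2 (Int.ofNat_le.2 (hdbar j)))
          (show q + 1 ≤ 0 by omega)]
      have := poleMult_diffPoly_div_pow_le_of_le_meromorphicOrderAt dbar hf hb hq
        fun j => (WithTop.coe_le_coe.2 (hm j)).trans (hmono j)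
      rw [show q.toNat = 0 by omega, show min 1 (-q).toNat = 1 by omega]
      split_ifs <;> omega
    lift q to ℕ using hq_nonneg
    simp only [Int.toNat_natCast, Int.toNat_neg_natCast, Nat.min_zero, mul_zero, zero_add]
    by_cases hqk : q ≤ k
    · have hf_nonneg : 0 ≤ meromorphicOrderAt f z := hq ▸ WithTop.coe_nonneg.2 q.cast_nonneg
      have := poleMult_diffPoly_div_pow_le_of_le_meromorphicOrderAt dbar hf hb hq (m := 0)
        fun j => by exact_mod_cast meromorphicOrderAt_diffMono_nonneg hf hf_nonneg (M j)
      split_ifs <;> omega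
    · have hm : ∀ j, (dlow * q - μ : ℤ) ≤
          monoDeg (M j) * q - ((monoWt (M j) : ℤ) - monoDeg (M j)) := fun j => by
        have : (monoWt (M j) : ℤ) - monoDeg (M j) ≤ μ := by
          have := hμ j
          have := monoDeg_le_monoWt (M j)
          omega
        nlinarith [mul_le_mul_of_nonneg_right (Int.ofNat_le.2 (hdlow j)) q.cast_nonneg]
      have := poleMult_diffPoly_div_pow_le_of_le_meromorphicOrderAt dbar hf hb hq
        fun j => (WithTop.coe_le_coe.2 (hm j)).trans (hmono j)
      rw [Nat.sub_mul]
      split_ifs <;> omega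

/-- `nCount ν` is a `finsum`, hence junk (`0`) on discs meeting the support of `ν` in infinitely
many points; additivity and monotonicity of the counting functions need this finiteness. -/
def FiniteInBalls (ν : ℂ → ℕ) : Prop :=
  ∀ R : ℝ, (Metric.closedBall (0 : ℂ) R ∩ Function.support ν).Finite

namespace FiniteInBalls

variable {ν ν' : ℂ → ℕ}

theorem of_support_subset (h : FiniteInBalls ν') (hs : Function.support ν ⊆ Function.support ν') :
    FiniteInBalls ν :=
  fun R => (h R).subset (Set.inter_subset_inter_right _ hs)

theorem mono (h : FiniteInBalls ν') (hle : ν ≤ ν') : FiniteInBalls ν :=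
  h.of_support_subset fun z hz => ((Nat.pos_of_ne_zero hz).trans_le (hle z)).ne'

theorem smul (h : FiniteInBalls ν) (c : ℕ) : FiniteInBalls (c • ν) :=
  h.of_support_subset (Function.support_smul_subset_right _ _)

theorem add (h : FiniteInBalls ν) (h' : FiniteInBalls ν') : FiniteInBalls (ν + ν') := fun R =>
  ((h R).union (h' R)).subset <| Set.inter_union_distrib_left _ _ _ ▸
    Set.inter_subset_inter_right _ (Function.support_add _ _)

theorem sum {ι : Type*} {s : Finset ι} {ν : ι → ℂ → ℕ} (h : ∀ i ∈ s, FiniteInBalls (ν i)) :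
    FiniteInBalls (∑ i ∈ s, ν i) := fun R =>
  (s.finite_toSet.biUnion fun i hi => h i hi R).subset fun z ⟨hz, hνz⟩ => by
    rw [Function.mem_support, Finset.sum_apply] at hνz
    obtain ⟨i, hi, hiz⟩ := Set.mem_iUnion₂.1 (Finset.support_sum s ν hνz)
    exact Set.mem_biUnion hi ⟨hz, hiz⟩

theorem finite_inter_support_natCast (h : FiniteInBalls ν) (R : ℝ) :
    (Metric.closedBall (0 : ℂ) R ∩ Function.support (fun z => (ν z : ℝ))).Finite := by
  simpa [Function.support] using h R

end FiniteInBalls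

theorem finiteInBalls_of_meromorphicOn {g : ℂ → ℂ} {ν : ℂ → ℕ}
    (hg : MeromorphicOn g Set.univ) (hν : ∀ z, ν z ≠ 0 → (meromorphicOrderAt g z).untop₀ ≠ 0) :
    FiniteInBalls ν := fun R =>
  have hgR : MeromorphicOn g (Metric.closedBall 0 R) := hg.mono_set (Set.subset_univ _)
  (hgR.divisor_support_finite_of_subset (isCompact_closedBall 0 R) subset_rfl).subset
    fun z ⟨hz, hνz⟩ => by
      rw [Function.mem_support, MeromorphicOn.divisor_apply hgR hz]
      exact hν z hνz

theorem finiteInBalls_zeroMult {g : ℂ → ℂ} (hg : MeromorphicOn g Set.univ) :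
    FiniteInBalls (zeroMult g) :=
  finiteInBalls_of_meromorphicOn hg fun z hz => by
    simp only [zeroMult, hg z trivial, dite_true] at hz
    simp only [WithTop.untop₀]
    omega

theorem finiteInBalls_poleMult {g : ℂ → ℂ} (hg : MeromorphicOn g Set.univ) :
    FiniteInBalls (poleMult g) :=
  finiteInBalls_of_meromorphicOn hg fun z hz => by
    simp only [poleMult, hg z trivial, dite_true] at hz
    simp only [WithTop.untop₀]
    omega

section Counting

variable {ν ν' : ℂ → ℕ} {r t : ℝ}

theorem nCount_add (hν : FiniteInBalls ν) (hν' : FiniteInBalls ν') (t : ℝ) :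
    nCount (ν + ν') t = nCount ν t + nCount ν' t := by
  simp only [nCount, Pi.add_apply, Nat.cast_add]
  exact finsum_mem_add_distrib' (hν.finite_inter_support_natCast t)
    (hν'.finite_inter_support_natCast t)

theorem nCount_smul (c : ℕ) (ν : ℂ → ℕ) (t : ℝ) : nCount (c • ν) t = c * nCount ν t := by
  simp only [nCount, Pi.smul_apply, smul_eq_mul, Nat.cast_mul]
  exact (mul_finsum_mem _ _).symm

theorem nCount_eq_sum {R : ℝ} (hν : FiniteInBalls ν) (ht : t ≤ R) :
    nCount ν t = ∑ z ∈ (hν R).toFinset with ‖z‖ ≤ t, (ν z : ℝ) := by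
  refine finsum_mem_eq_sum_of_subset _ (fun z ⟨hz, hνz⟩ => ?_) fun z hz => ?_
  · have hz' : ‖z‖ ≤ t := by simpa using hz
    simp_all [hz'.trans ht]
  · simp_all

theorem nCount_mono (hν : FiniteInBalls ν) : Monotone (nCount ν) := fun t t' h => by
  rw [nCount_eq_sum hν h, nCount_eq_sum hν le_rfl]
  refine Finset.sum_le_sum_of_subset_of_nonneg (fun z hz => ?_) fun _ _ _ => Nat.cast_nonneg _
  simp only [Finset.mem_filter] at hz ⊢
  exact ⟨hz.1, hz.2.trans h⟩

theorem natCast_le_nCount (hν : FiniteInBalls ν) (ht : 0 ≤ t) : (ν 0 : ℝ) ≤ nCount ν t := by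
  rw [nCount_eq_sum hν le_rfl]
  by_cases h0 : ν 0 = 0
  · simp only [h0, Nat.cast_zero]
    positivity
  · exact Finset.single_le_sum (fun _ _ => Nat.cast_nonneg _) (by simp [h0, ht])

theorem exists_nCount_eq_apply_zero (hν : FiniteInBalls ν) :
    ∃ ε > 0, ∀ t ∈ Set.Ico 0 ε, nCount ν t = ν 0 := by
  obtain ⟨ε, hε, hball⟩ := Metric.mem_nhds_iff.1 <|
    ((hν 1).sdiff (t := {0})).isClosed.isOpen_compl.mem_nhds (x := 0) fun h => h.2 rfl
  refine ⟨min ε 1, lt_min hε one_pos, fun t ⟨ht₀, ht⟩ => ?_⟩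
  have hsupp : ∀ z : ℂ, ‖z‖ ≤ t → ν z ≠ 0 → z = 0 := fun z hz hνz => by_contra fun hz₀ =>
    hball (mem_ball_zero_iff.2 (by linarith [min_le_left ε 1]))
      ⟨⟨mem_closedBall_zero_iff.2 (by linarith [min_le_right ε 1]), hνz⟩, hz₀⟩
  rw [nCount, finsum_mem_inter_support_eq _ _ {0}, finsum_mem_singleton]
  ext z
  simp only [Set.mem_inter_iff, mem_closedBall_zero_iff, Set.mem_singleton_iff,
    Function.mem_support, ne_eq, Nat.cast_eq_zero]
  exact ⟨fun ⟨hz, hνz⟩ => ⟨hsupp z hz hνz, hνz⟩, fun ⟨hz, hνz⟩ => ⟨by simpa [hz] using ht₀, hνz⟩⟩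

theorem intervalIntegrable_nCount_sub_div (hν : FiniteInBalls ν) (hr : 0 ≤ r) :
    IntervalIntegrable (fun t => (nCount ν t - ν 0) / t) volume 0 r := by
  rcases hr.eq_or_lt with rfl | hr
  · exact IntervalIntegrable.refl
  obtain ⟨ε, hε, hflat⟩ := exists_nCount_eq_apply_zero hν
  set c := min (ε / 2) r
  have hc : 0 < c := lt_min (half_pos hε) hr
  have h0c : IntervalIntegrable (fun t => (nCount ν t - ν 0) / t) volume 0 c := by
    refine (intervalIntegrable_congr fun t ht => ?_).1 (intervalIntegrable_const (c := (0 : ℝ)))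
    rw [Set.uIoc_of_le hc.le] at ht
    have htε : t < ε := ht.2.trans_lt ((min_le_left _ _).trans_lt (half_lt_self hε))
    simp [hflat t ⟨ht.1.le, htε⟩]
  have hcr : IntervalIntegrable (fun t => (nCount ν t - ν 0) / t) volume c r := by
    have hmono : Monotone fun t => nCount ν t - ν 0 := fun _ _ h => by
      simpa using nCount_mono hν h
    simpa [div_eq_mul_inv] using (hmono.monotoneOn _).intervalIntegrable.mul_continuousOn
      (continuousOn_inv₀.mono fun t ht => ((lt_inf_iff.2 ⟨hc, hr⟩).trans_le ht.1).ne')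
  exact h0c.trans hcr

theorem NCount_add (hν : FiniteInBalls ν) (hν' : FiniteInBalls ν') (hr : 0 ≤ r) :
    NCount (ν + ν') r = NCount ν r + NCount ν' r := by
  have hsplit : ∀ t, (nCount (ν + ν') t - (ν + ν') 0 : ℝ) / t =
      (nCount ν t - ν 0) / t + (nCount ν' t - ν' 0) / t := fun t => by
    rw [nCount_add hν hν', Pi.add_apply, Nat.cast_add]
    ring
  rw [NCount, NCount, NCount, intervalIntegral.integral_congr fun t _ => hsplit t,
    intervalIntegral.integral_add (intervalIntegrable_nCount_sub_div hν hr)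
      (intervalIntegrable_nCount_sub_div hν' hr), Pi.add_apply, Nat.cast_add]
  ring

theorem NCount_smul (c : ℕ) (ν : ℂ → ℕ) (r : ℝ) : NCount (c • ν) r = c * NCount ν r := by
  simp only [NCount, nCount_smul, Pi.smul_apply, smul_eq_mul, Nat.cast_mul, ← mul_sub,
    mul_div_assoc, intervalIntegral.integral_const_mul]
  ring

theorem NCount_zero (r : ℝ) : NCount 0 r = 0 := by
  simpa using NCount_smul 0 0 r

theorem NCount_sum {ι : Type*} {s : Finset ι} {ν : ι → ℂ → ℕ}
    (hν : ∀ i ∈ s, FiniteInBalls (ν i)) (hr : 0 ≤ r) :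
    NCount (∑ i ∈ s, ν i) r = ∑ i ∈ s, NCount (ν i) r := by
  induction s using Finset.induction_on with
  | empty => simpa using NCount_zero r
  | insert a s ha ih =>
    simp only [Finset.mem_insert, forall_eq_or_imp] at hν
    rw [Finset.sum_insert ha, Finset.sum_insert ha, NCount_add hν.1 (FiniteInBalls.sum hν.2) hr,
      ih hν.2]

theorem NCount_nonneg (hν : FiniteInBalls ν) (hr : 1 ≤ r) : 0 ≤ NCount ν r :=
  add_nonneg (mul_nonneg (Nat.cast_nonneg _) (Real.log_nonneg hr))
    (intervalIntegral.integral_nonneg (by linarith) fun t ht =>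
      div_nonneg (sub_nonneg.2 (natCast_le_nCount hν ht.1)) ht.1)

theorem NCount_mono (hν' : FiniteInBalls ν') (hle : ν ≤ ν') (hr : 1 ≤ r) :
    NCount ν r ≤ NCount ν' r := by
  have hdiff : FiniteInBalls (ν' - ν) := hν'.mono tsub_le_self
  rw [← add_tsub_cancel_of_le hle, NCount_add (hν'.mono hle) hdiff (by linarith)]
  exact le_add_of_nonneg_right (NCount_nonneg hdiff hr)

end Counting

theorem Npole_diffPoly_div_pow_le {t k : ℕ} {f : ℂ → ℂ} {b : Fin t → ℂ → ℂ}
    {M : Fin t → Fin (k + 1) → ℕ} {dbar dlow Γ μ : ℕ} {r : ℝ} (hf : MeromorphicOn f Set.univ)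
    (hb : ∀ j, MeromorphicOn (b j) Set.univ)
    (hdbar : ∀ j, monoDeg (M j) ≤ dbar) (hdlow : ∀ j, dlow ≤ monoDeg (M j))
    (hΓ : ∀ j, monoWt (M j) ≤ Γ) (hμ : ∀ j, monoWt (M j) - monoDeg (M j) ≤ μ)
    (hdbar_pos : 0 < dbar) (hr : 1 ≤ r) :
    Npole (fun z => diffPoly b M f z / f z ^ dbar) r ≤
      (Γ - dbar : ℕ) * NpoleRed f r + (dbar - dlow : ℕ) * NzeroGe f (k + 1) r
        + μ * NzeroRedGe f (k + 1) r + dbar * NzeroLe f k r + ∑ j, Npole (b j) r := by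
  have hr₀ : 0 ≤ r := by linarith
  have hzero := finiteInBalls_zeroMult hf
  have h₁ : FiniteInBalls (poleMultRed f) :=
    (finiteInBalls_poleMult hf).mono fun z => min_le_right _ _
  have h₂ : FiniteInBalls (zeroMultGe f (k + 1)) :=
    hzero.mono fun z => by dsimp only [zeroMultGe]; split_ifs <;> omega
  have h₃ : FiniteInBalls (zeroMultRedGe f (k + 1)) :=
    hzero.mono fun z => by dsimp only [zeroMultRedGe]; split_ifs <;> omega
  have h₄ : FiniteInBalls (zeroMultLe f k) :=
    hzero.mono fun z => by dsimp only [zeroMultLe]; split_ifs <;> omega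
  have h₅ : ∀ j ∈ Finset.univ, FiniteInBalls (poleMult (b j)) :=
    fun j _ => finiteInBalls_poleMult (hb j)
  have h₁₂ := (h₁.smul (Γ - dbar)).add (h₂.smul (dbar - dlow))
  have h₁₂₃ := h₁₂.add (h₃.smul μ)
  have h₁₂₃₄ := h₁₂₃.add (h₄.smul dbar)
  calc Npole (fun z => diffPoly b M f z / f z ^ dbar) r
      ≤ NCount ((Γ - dbar) • poleMultRed f + (dbar - dlow) • zeroMultGe f (k + 1)
          + μ • zeroMultRedGe f (k + 1) + dbar • zeroMultLe f k + ∑ j, poleMult (b j)) r := by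
        refine NCount_mono (h₁₂₃₄.add (FiniteInBalls.sum h₅)) (fun z => ?_) hr
        simpa using poleMult_diffPoly_div_pow_le (hf z trivial) (fun j => hb j z trivial)
          hdbar hdlow hΓ hμ hdbar_pos
    _ = _ := by
        rw [NCount_add h₁₂₃₄ (FiniteInBalls.sum h₅) hr₀, NCount_add h₁₂₃ (h₄.smul _) hr₀,
          NCount_add h₁₂ (h₃.smul _) hr₀, NCount_add (h₁.smul _) (h₂.smul _) hr₀,
          NCount_smul, NCount_smul, NCount_smul, NCount_smul, NCount_sum h₅ hr₀]
        rfl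

theorem isSmall_zero (f : ℂ → ℂ) : IsSmall 0 f :=
  ⟨∅, by simp, by simp⟩

theorem IsSmall.add {s₁ s₂ : ℝ → ℝ} {f : ℂ → ℂ} (h₁ : IsSmall s₁ f) (h₂ : IsSmall s₂ f) :
    IsSmall (s₁ + s₂) f := by
  obtain ⟨E₁, hE₁, ht₁⟩ := h₁
  obtain ⟨E₂, hE₂, ht₂⟩ := h₂
  refine ⟨E₁ ∪ E₂, measure_union_lt_top hE₁ hE₂, ?_⟩
  have hle : ∀ E ⊆ E₁ ∪ E₂, atTop ⊓ 𝓟 (E₁ ∪ E₂)ᶜ ≤ atTop ⊓ 𝓟 Eᶜ := fun E hE =>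
    inf_le_inf_left _ (principal_mono.2 (Set.compl_subset_compl.2 hE))
  simpa [add_div] using (ht₁.mono_left (hle E₁ Set.subset_union_left)).add
    (ht₂.mono_left (hle E₂ Set.subset_union_right))

theorem isSmall_sum {ι : Type*} {s : Finset ι} {σ : ι → ℝ → ℝ} {f : ℂ → ℂ}
    (h : ∀ i ∈ s, IsSmall (σ i) f) : IsSmall (∑ i ∈ s, σ i) f := by
  induction s using Finset.induction_on with
  | empty => simpa using isSmall_zero f
  | insert a s ha ih =>
    simp only [Finset.mem_insert, forall_eq_or_imp] at h
    rw [Finset.sum_insert ha]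
    exact h.1.add (ih h.2)

theorem Npole_le_charT (g : ℂ → ℂ) (r : ℝ) : Npole g r ≤ charT g r :=
  le_add_of_nonneg_left <| mul_nonneg (by positivity) <|
    intervalIntegral.integral_nonneg (by positivity) fun _ _ => le_max_right _ _

end Nevanlinna

/-- pole counting function of `P[f]/f^{d̄(P)}`. -/
theorem pole_counting_diffPoly_div_pow
    (f : ℂ → ℂ) (hf : NonconstMero f)
    {t k : ℕ} (b : Fin t → ℂ → ℂ) (M : Fin t → Fin (k + 1) → ℕ)
    (hbmero : ∀ j, MeromorphicOn (b j) Set.univ)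
    (hbsmall : ∀ j, IsSmallFunction (b j) f)
    (dbar : ℕ)
    (hdbar : (∀ j, monoDeg (M j) ≤ dbar) ∧ ∃ j, monoDeg (M j) = dbar)
    (dlow : ℕ)
    (hdlow : (∀ j, dlow ≤ monoDeg (M j)) ∧ ∃ j, monoDeg (M j) = dlow)
    (Γ : ℕ)
    (hΓ : (∀ j, monoWt (M j) ≤ Γ) ∧ ∃ j, monoWt (M j) = Γ)
    (hord : ∃ j, M j (Fin.last k) ≠ 0)
    (μ : ℕ)
    (hμ : (∀ j, monoWt (M j) - monoDeg (M j) ≤ μ) ∧ ∃ j, monoWt (M j) - monoDeg (M j) = μ)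
    :
    ∃ s : ℝ → ℝ, IsSmall s f ∧ ∀ r : ℝ, 1 ≤ r →
      Npole (fun z => diffPoly b M f z / f z ^ dbar) r
        ≤ ((Γ : ℝ) - dbar) * NpoleRed f r
          + ((dbar : ℝ) - dlow) * NzeroGe f (k + 1) r
          + (μ : ℝ) * NzeroRedGe f (k + 1) r
          + (dbar : ℝ) * NzeroLe f k r + s r := by
  obtain ⟨j₀, hj₀⟩ := hdbar.2
  have hdbar_pos : 0 < dbar := by
    obtain ⟨j, hj⟩ := hord
    exact (Nat.pos_of_ne_zero hj).trans_le <| (Finset.single_le_sum (fun _ _ => Nat.zero_le _)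
      (Finset.mem_univ _)).trans (hdbar.1 j)
  have hdlow_le : dlow ≤ dbar := hj₀ ▸ hdlow.1 j₀
  have hdbar_le : dbar ≤ Γ := hj₀ ▸ (monoDeg_le_monoWt _).trans (hΓ.1 j₀)
  refine ⟨∑ j, charT (b j), isSmall_sum fun j _ => hbsmall j, fun r hr => ?_⟩
  have hP := Npole_diffPoly_div_pow_le hf.1 hbmero hdbar.1 hdlow.1 hΓ.1 hμ.1 hdbar_pos hr
  have hb : ∑ j, Npole (b j) r ≤ ∑ j, charT (b j) r :=
    Finset.sum_le_sum fun j _ => Npole_le_charT (b j) r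
  rw [Nat.cast_sub hdlow_le, Nat.cast_sub hdbar_le] at hP
  rw [Finset.sum_apply]
  linarith
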